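/- Let A ∈ Z^{t×(t+c-1)} be a degree matrix with all rows equal to (a_1,...,a_{t+c-1}), a_i ≥ 1. Then hp^A(z) equals the generating function Σ_i f_i(Γ) z^i of the pure order ideal Γ in monomials in variables y_1,...,y_c generated by the monomials y_1^{(Σ_{i=1}^{l_1-1} a_i)-1} y_2^{(Σ_{i=l_1}^{l_2-1} a_i)-1} ⋯ y_c^{(Σ_{i=l_{c-1}}^{t+c-1} a_i)-1} over all sequences 1 = l_0 < l_1 < ... < l_{c-1} ≤ t+c-1. In particular the h-vector of A is a pure O-sequence. -/

import Mathlib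

open Polynomial

/-- The polynomial `1 + z + ⋯ + z^(d-1)`. -/
noncomputable def geom (d : ℤ) : Polynomial ℤ :=
  ∑ i ∈ Finset.range d.toNat, Polynomial.X ^ i

/-- The h-polynomial of a standard determinantal ideal with `t × m` degree matrix `A`
(codimension `m - t + 1`), defined via the basic-double-link recursion applied at the
bottom-right entry, with the conventions `hp = 0` for `t = 0` and `hp = 1` for `m < t`. -/
noncomputable def hp : (t m : ℕ) → Matrix (Fin t) (Fin m) ℤ → Polynomial ℤ
  | 0, _, _ => 0
  | _ + 1, 0, _ => 1
  | t + 1, m + 1, A =>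
    if m + 1 ≤ t then 1
    else
      Polynomial.X ^ (A (Fin.last t) (Fin.last m)).toNat *
          hp t m (fun i j => A i.castSucc j.castSucc) +
        geom (A (Fin.last t) (Fin.last m)) * hp (t + 1) m (fun i j => A i j.castSucc)
  termination_by t m => (t, m)

/-- Delete row `k` and column `l` of a matrix. -/
def delRC {t m : ℕ} (A : Matrix (Fin (t + 1)) (Fin (m + 1)) ℤ)
    (k : Fin (t + 1)) (l : Fin (m + 1)) : Matrix (Fin t) (Fin m) ℤ :=
  fun i j => A (k.succAbove i) (l.succAbove j)

/-- Delete column `l` of a matrix. -/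
def delC {t m : ℕ} (A : Matrix (Fin t) (Fin (m + 1)) ℤ) (l : Fin (m + 1)) :
    Matrix (Fin t) (Fin m) ℤ :=
  fun i j => A i (l.succAbove j)

/-- `A` is a degree matrix: homogeneous (`a_{i,j} = b_j - a_i`), entries weakly increasing
left-to-right and bottom-to-top, and positive on the main diagonal. -/
def IsDegreeMatrix {a b : ℕ} (A : Matrix (Fin a) (Fin b) ℤ) : Prop :=
  (∃ (α : Fin a → ℤ) (β : Fin b → ℤ), ∀ i j, A i j = β j - α i) ∧
    (∀ (i : Fin a) (j j' : Fin b), j ≤ j' → A i j ≤ A i j') ∧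
    (∀ (i i' : Fin a) (j : Fin b), i ≤ i' → A i' j ≤ A i j) ∧
    (∀ (i : Fin a) (h : (i : ℕ) < b), 0 < A i ⟨i, h⟩)

/-- Binomial coefficient with integer top argument, with the convention that it vanishes
whenever the top argument is negative or smaller than the bottom one. -/
def ch (a : ℤ) (b : ℕ) : ℤ := if a < 0 then 0 else (a.toNat).choose b

/-- `h : ℕ → ℤ` is a pure O-sequence: it is the f-vector (counting monomials by degree)
of a nonempty finite order ideal of monomials all of whose maximal elements have the
same degree. -/
def IsPureOSequence (h : ℕ → ℤ) : Prop :=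
  ∃ (N : ℕ) (Γ : Finset (Fin N → ℕ)),
    Γ.Nonempty ∧
      (∀ μ ∈ Γ, ∀ ν : Fin N → ℕ, ν ≤ μ → ν ∈ Γ) ∧
      (∃ d : ℕ, ∀ μ ∈ Γ, (∀ ν ∈ Γ, μ ≤ ν → μ = ν) → ∑ j, μ j = d) ∧
      (∀ i : ℕ, ((Γ.filter fun μ => ∑ j, μ j = i).card : ℤ) = h i)

/-!
When all rows of `A` equal `(a_1, …, a_m)`, the recursion defining `hp` only deletes the last
row and/or the last column, so `hp` depends only on `t`, `c` and the row, and, with `N = t + c + 1`,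
`hp_{t,c} = z^{a_N} hp_{t-1,c} + (1 + ⋯ + z^{a_N - 1}) hp_{t,c-1}`.
The order ideal `Γ_{t,c}` satisfies the same recursion: split its monomials according to whether
the exponent of the last variable is at least `a_N`. Those that are become, after division by
`y_{c+1}^{a_N}`, exactly the monomials of `Γ_{t-1,c}` (the last breakpoint moves down by one);
those that are not are the products of a monomial of `Γ_{t,c-1}` with `y_{c+1}^r`, `r < a_N`
(the last block becomes `{N}`). All generators have degree `a_1 + ⋯ + a_N - (c + 1)`, since the
blocks partition `{1, …, N}`; this gives the purity of `Γ` and the degree of `hp`.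
-/

open Finset

section Blocks

variable {a : ℕ → ℤ}

def blockExp (a : ℕ → ℤ) {n : ℕ} (l : Fin (n + 1) → ℕ) (k : Fin n) : ℕ :=
  ((∑ i ∈ Ico (l k.castSucc) (l k.succ), a i) - 1).toNat

lemma blockExp_snoc_castSucc {n : ℕ} (p : Fin (n + 1) → ℕ) (b : ℕ) (j : Fin n) :
    blockExp a (Fin.snoc p b) j.castSucc = blockExp a p j := by
  simp only [blockExp, Fin.succ_castSucc, Fin.snoc_castSucc]

lemma blockExp_snoc_last {n : ℕ} (p : Fin (n + 1) → ℕ) (b : ℕ) :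
    blockExp a (Fin.snoc p b) (Fin.last n) =
      ((∑ i ∈ Ico (p (Fin.last n)) b, a i) - 1).toNat := by
  simp only [blockExp, Fin.succ_last, Fin.snoc_castSucc, Fin.snoc_last]

lemma strictMono_snoc_iff {n : ℕ} {p : Fin (n + 1) → ℕ} {b : ℕ} :
    StrictMono (Fin.snoc p b : Fin (n + 2) → ℕ) ↔ StrictMono p ∧ p (Fin.last n) < b := by
  simp only [Fin.strictMono_iff_lt_succ (f := (Fin.snoc p b : Fin (n + 2) → ℕ)),
    Fin.forall_fin_succ', Fin.succ_castSucc, Fin.snoc_castSucc, Fin.succ_last, Fin.snoc_last,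
    Fin.strictMono_iff_lt_succ (f := p)]

lemma StrictMono.apply_zero_add_le {n : ℕ} {l : Fin (n + 1) → ℕ} (hl : StrictMono l)
    (k : Fin (n + 1)) : l 0 + k ≤ l k := by
  induction k using Fin.induction with
  | zero => simp
  | succ k ih =>
    have := hl k.castSucc_lt_succ
    simp only [Fin.val_succ, Fin.val_castSucc] at ih ⊢
    omega

lemma sum_Ico_nonneg {N u v : ℕ} (ha : ∀ i ∈ Icc 1 N, 0 < a i) (hu : 1 ≤ u)
    (hv : v ≤ N + 1) : 0 ≤ ∑ i ∈ Ico u v, a i :=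
  sum_nonneg fun i hi => (ha i (by simp only [mem_Ico, mem_Icc] at hi ⊢; omega)).le

lemma sum_Ico_pos {N u v : ℕ} (ha : ∀ i ∈ Icc 1 N, 0 < a i) (hu : 1 ≤ u) (huv : u < v)
    (hv : v ≤ N + 1) : 0 < ∑ i ∈ Ico u v, a i :=
  sum_pos (fun i hi => ha i (by simp only [mem_Ico, mem_Icc] at hi ⊢; omega))
    (nonempty_Ico.2 huv)

lemma sum_Ico_blocks : ∀ {n : ℕ} (l : Fin (n + 1) → ℕ), Monotone l →
    ∑ k : Fin n, ∑ i ∈ Ico (l k.castSucc) (l k.succ), a i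
      = ∑ i ∈ Ico (l 0) (l (Fin.last n)), a i
  | 0, _, _ => by simp
  | n + 1, l, hl => by
    rw [Fin.sum_univ_castSucc, ← Fin.succ_last, ← sum_Ico_consecutive a (hl (Fin.zero_le _))
      (hl (Fin.castSucc_le_succ _))]
    simpa only [Fin.succ_castSucc, Fin.castSucc_zero] using congrArg (· + _)
      (sum_Ico_blocks (fun k => l k.castSucc) (hl.comp Fin.strictMono_castSucc.monotone))

lemma blockExp_snoc_le_snoc {N n : ℕ} (ha : ∀ i ∈ Icc 1 N, 0 < a i) {p : Fin (n + 1) → ℕ}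
    {b b' : ℕ} (hb : 1 ≤ b) (hpb : p (Fin.last n) ≤ b) (hbb' : b ≤ b') (hb' : b' ≤ N + 1)
    (k : Fin (n + 1)) :
    blockExp a (Fin.snoc p b) k ≤ blockExp a (Fin.snoc p b') k := by
  induction k using Fin.lastCases with
  | last =>
    rw [blockExp_snoc_last, blockExp_snoc_last, ← sum_Ico_consecutive a hpb hbb']
    have := sum_Ico_nonneg ha hb hb'
    omega
  | cast j => rw [blockExp_snoc_castSucc, blockExp_snoc_castSucc]

lemma blockExp_le_sum_toNat {n : ℕ} {l : Fin (n + 1) → ℕ} (hl : Monotone l) (k : Fin n) :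
    blockExp a l k ≤ ∑ i ∈ range (l (Fin.last n)), (a i).toNat := by
  have hsub : ∑ i ∈ Ico (l k.castSucc) (l k.succ), (a i).toNat
      ≤ ∑ i ∈ range (l (Fin.last n)), (a i).toNat :=
    sum_le_sum_of_subset fun i hi => by
      have := hl (Fin.le_last k.succ)
      simp only [mem_Ico, mem_range] at hi ⊢
      omega
  have hle : ∑ i ∈ Ico (l k.castSucc) (l k.succ), a i
      ≤ ((∑ i ∈ Ico (l k.castSucc) (l k.succ), (a i).toNat : ℕ) : ℤ) := by
    push_cast
    exact sum_le_sum fun i _ => Int.self_le_toNat _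
  rw [blockExp]
  omega

end Blocks

section OrderIdeal

variable {t c : ℕ} {a : ℕ → ℤ}

def orderIdealGens (t c : ℕ) (a : ℕ → ℤ) : Set (Fin (c + 1) → ℕ) :=
  {μ | ∃ l : Fin (c + 2) → ℕ, StrictMono l ∧ l 0 = 1 ∧
    l (Fin.last (c + 1)) = t + c + 2 ∧ ∀ k, μ k = blockExp a l k}

def orderIdeal (t c : ℕ) (a : ℕ → ℤ) : Set (Fin (c + 1) → ℕ) :=
  {μ | ∃ g ∈ orderIdealGens t c a, μ ≤ g}

lemma mem_orderIdeal {μ : Fin (c + 1) → ℕ} :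
    μ ∈ orderIdeal t c a ↔ ∃ p : Fin (c + 1) → ℕ, StrictMono p ∧ p 0 = 1 ∧
      p (Fin.last c) < t + c + 2 ∧ ∀ k, μ k ≤ blockExp a (Fin.snoc p (t + c + 2)) k := by
  constructor
  · rintro ⟨g, ⟨l, hl, hl0, hlast, hg⟩, hμg⟩
    obtain ⟨p, rfl⟩ : ∃ p, l = Fin.snoc p (t + c + 2) :=
      ⟨Fin.init l, by rw [← hlast, Fin.snoc_init_self]⟩
    rw [← Fin.castSucc_zero, Fin.snoc_castSucc] at hl0
    exact ⟨p, (strictMono_snoc_iff.1 hl).1, hl0, (strictMono_snoc_iff.1 hl).2,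
      fun k => (hμg k).trans (hg k).le⟩
  · rintro ⟨p, hp, hp0, hplast, hμ⟩
    refine ⟨_, ⟨Fin.snoc p (t + c + 2), strictMono_snoc_iff.2 ⟨hp, hplast⟩, ?_,
      Fin.snoc_last _ _, fun k => rfl⟩, hμ⟩
    rw [← Fin.castSucc_zero, Fin.snoc_castSucc, hp0]

lemma orderIdeal_finite (t c : ℕ) (a : ℕ → ℤ) : (orderIdeal t c a).Finite :=
  (Set.finite_Iic fun _ => ∑ i ∈ range (t + c + 2), (a i).toNat).subset
    fun _ ⟨_, ⟨_, hl, _, hlast, hg⟩, hμg⟩ k =>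
      (hμg k).trans ((hg k).le.trans (hlast ▸ blockExp_le_sum_toNat hl.monotone k))

lemma sub_single_last_mem_orderIdeal (ha : ∀ i ∈ Icc 1 (t + c + 2), 0 < a i)
    {μ : Fin (c + 1) → ℕ} (hμ : μ ∈ orderIdeal (t + 1) c a)
    (hμlast : (a (t + c + 2)).toNat ≤ μ (Fin.last c)) :
    μ - Pi.single (Fin.last c) (a (t + c + 2)).toNat ∈ orderIdeal t c a := by
  obtain ⟨p, hp, hp0, hplast, hμp⟩ := mem_orderIdeal.1 hμ
  rw [show t + 1 + c + 2 = t + c + 2 + 1 by omega] at hplast hμp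
  have hlast := hμp (Fin.last c)
  rw [blockExp_snoc_last, sum_Ico_succ_top (by omega)] at hlast
  have hp1 : 1 ≤ p (Fin.last c) := hp0 ▸ hp.monotone (Fin.zero_le _)
  have haM := ha (t + c + 2) (by simp)
  -- otherwise the last block is `{t + c + 2}`, whose exponent is below `a (t + c + 2)`
  have hpM : p (Fin.last c) < t + c + 2 := by
    by_contra h
    rw [show p (Fin.last c) = t + c + 2 by omega, Ico_self, sum_empty] at hlast
    omega
  have hS := sum_Ico_pos ha hp1 hpM (by omega)
  refine mem_orderIdeal.2 ⟨p, hp, hp0, hpM, Fin.lastCases ?_ fun j => ?_⟩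
  · rw [blockExp_snoc_last, Pi.sub_apply, Pi.single_eq_same]
    omega
  · rw [blockExp_snoc_castSucc, Pi.sub_apply, Pi.single_eq_of_ne (Fin.castSucc_lt_last j).ne,
      tsub_zero, ← blockExp_snoc_castSucc p (t + c + 2 + 1)]
    exact hμp j.castSucc

lemma add_single_last_mem_orderIdeal (ha : ∀ i ∈ Icc 1 (t + c + 2), 0 < a i)
    {ν : Fin (c + 1) → ℕ} (hν : ν ∈ orderIdeal t c a) :
    ν + Pi.single (Fin.last c) (a (t + c + 2)).toNat ∈ orderIdeal (t + 1) c a := by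
  obtain ⟨p, hp, hp0, hplast, hνp⟩ := mem_orderIdeal.1 hν
  have hp1 : 1 ≤ p (Fin.last c) := hp0 ▸ hp.monotone (Fin.zero_le _)
  have hS := sum_Ico_pos ha hp1 hplast (by omega)
  have haM := ha (t + c + 2) (by simp)
  refine mem_orderIdeal.2 ⟨p, hp, hp0, by omega, Fin.lastCases ?_ fun j => ?_⟩
  · have hlast := hνp (Fin.last c)
    rw [blockExp_snoc_last] at hlast
    rw [blockExp_snoc_last, show t + 1 + c + 2 = t + c + 2 + 1 by omega,
      sum_Ico_succ_top (by omega), Pi.add_apply, Pi.single_eq_same]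
    omega
  · rw [blockExp_snoc_castSucc, Pi.add_apply, Pi.single_eq_of_ne (Fin.castSucc_lt_last j).ne,
      add_zero, ← blockExp_snoc_castSucc p (t + c + 2)]
    exact hνp j.castSucc

lemma init_mem_orderIdeal (ha : ∀ i ∈ Icc 1 (t + c + 2), 0 < a i)
    {μ : Fin (c + 2) → ℕ} (hμ : μ ∈ orderIdeal t (c + 1) a) :
    Fin.init μ ∈ orderIdeal t c a := by
  obtain ⟨p, hp, hp0, hplast, hμp⟩ := mem_orderIdeal.1 hμ
  obtain ⟨q, b, rfl⟩ : ∃ q b, p = Fin.snoc q b :=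
    ⟨Fin.init p, p (Fin.last _), (Fin.snoc_init_self p).symm⟩
  obtain ⟨hq, hqb⟩ := strictMono_snoc_iff.1 hp
  rw [← Fin.castSucc_zero, Fin.snoc_castSucc] at hp0
  rw [Fin.snoc_last] at hplast
  have hq1 : 1 ≤ q (Fin.last c) := hp0 ▸ hq.monotone (Fin.zero_le _)
  refine mem_orderIdeal.2 ⟨q, hq, hp0, by omega, fun k => ?_⟩
  calc Fin.init μ k = μ k.castSucc := rfl
    _ ≤ blockExp a (Fin.snoc q b) k := blockExp_snoc_castSucc (a := a) _ _ k ▸ hμp k.castSucc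
    _ ≤ blockExp a (Fin.snoc q (t + c + 2)) k :=
      blockExp_snoc_le_snoc ha (by omega) hqb.le (by omega) (by omega) k

lemma snoc_mem_orderIdeal {ν : Fin (c + 1) → ℕ} (hν : ν ∈ orderIdeal t c a) {r : ℕ}
    (hr : r < (a (t + c + 2)).toNat) :
    (Fin.snoc ν r : Fin (c + 2) → ℕ) ∈ orderIdeal t (c + 1) a := by
  obtain ⟨p, hp, hp0, hplast, hνp⟩ := mem_orderIdeal.1 hν
  refine mem_orderIdeal.2 ⟨Fin.snoc p (t + c + 2), strictMono_snoc_iff.2 ⟨hp, hplast⟩, ?_,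
    by rw [Fin.snoc_last]; omega, Fin.lastCases ?_ fun j => ?_⟩
  · rw [← Fin.castSucc_zero, Fin.snoc_castSucc, hp0]
  · rw [Fin.snoc_last, blockExp_snoc_last, Fin.snoc_last,
      show t + (c + 1) + 2 = t + c + 2 + 1 by omega, Nat.Ico_succ_singleton, sum_singleton]
    omega
  · rw [Fin.snoc_castSucc, blockExp_snoc_castSucc]
    exact hνp j

lemma last_lt_of_mem_orderIdeal_zero (ha : 0 < a (c + 1)) {μ : Fin (c + 1) → ℕ}
    (hμ : μ ∈ orderIdeal 0 c a) : μ (Fin.last c) < (a (c + 1)).toNat := by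
  obtain ⟨p, hp, hp0, hplast, hμp⟩ := mem_orderIdeal.1 hμ
  have hpc := hp.apply_zero_add_le (Fin.last c)
  rw [hp0, Fin.val_last] at hpc
  have hlast := hμp (Fin.last c)
  rw [blockExp_snoc_last, show p (Fin.last c) = c + 1 by omega,
    show 0 + c + 2 = c + 1 + 1 by omega, Nat.Ico_succ_singleton, sum_singleton] at hlast
  omega

lemma const_mem_orderIdeal_zero (ha : ∀ i ∈ Icc 1 (t + 1), 0 < a i) {r : ℕ}
    (hr : r < (a (t + 1)).toNat) : (fun _ => r) ∈ orderIdeal t 0 a := by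
  refine mem_orderIdeal.2 ⟨fun _ => 1, Subsingleton.strictMono (α := Fin 1) _, rfl,
    show 1 < t + 0 + 2 by omega,
    Fin.lastCases ?_ fun j => j.elim0⟩
  rw [blockExp_snoc_last, show t + 0 + 2 = t + 1 + 1 by omega, sum_Ico_succ_top (by omega)]
  have := sum_Ico_nonneg ha le_rfl (by omega : t + 1 ≤ t + 1 + 1)
  omega

lemma sum_eq_of_mem_orderIdealGens (ha : ∀ i ∈ Icc 1 (t + c + 1), 0 < a i)
    {g : Fin (c + 1) → ℕ} (hg : g ∈ orderIdealGens t c a) :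
    ((∑ k, g k : ℕ) : ℤ) = ∑ i ∈ Ico 1 (t + c + 2), a i - (c + 1) := by
  obtain ⟨l, hl, hl0, hlast, hg⟩ := hg
  have hblock : ∀ k, (g k : ℤ) = ∑ i ∈ Ico (l k.castSucc) (l k.succ), a i - 1 := fun k => by
    have h0 : l 0 ≤ l k.castSucc := hl.monotone (Fin.zero_le _)
    have h1 : l k.succ ≤ l (Fin.last (c + 1)) := hl.monotone (Fin.le_last _)
    have := sum_Ico_pos ha (by omega) (hl k.castSucc_lt_succ) (by omega)
    rw [hg, blockExp]
    omega
  push_cast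
  rw [sum_congr rfl fun k _ => hblock k, sum_sub_distrib, sum_Ico_blocks l hl.monotone, hl0,
    hlast]
  simp

lemma sum_le_of_mem_orderIdeal (ha : ∀ i ∈ Icc 1 (t + c + 1), 0 < a i)
    {μ g : Fin (c + 1) → ℕ} (hμ : μ ∈ orderIdeal t c a) (hg : g ∈ orderIdealGens t c a) :
    ∑ k, μ k ≤ ∑ k, g k := by
  obtain ⟨g', hg', hμg'⟩ := hμ
  have := sum_le_sum fun k (_ : k ∈ univ) => hμg' k
  have := sum_eq_of_mem_orderIdealGens ha hg
  have := sum_eq_of_mem_orderIdealGens ha hg'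
  omega

end OrderIdeal

noncomputable def degreeGenFun {n : ℕ} (s : Finset (Fin n → ℕ)) : ℤ[X] :=
  ∑ μ ∈ s, X ^ ∑ k, μ k

lemma coeff_degreeGenFun {n : ℕ} (s : Finset (Fin n → ℕ)) (i : ℕ) :
    (degreeGenFun s).coeff i = #{μ ∈ s | ∑ k, μ k = i} := by
  simp [degreeGenFun, finsetSum_coeff, coeff_X_pow, sum_boole, eq_comm]

lemma degreeGenFun_eq_filter_add_filter {n : ℕ} (s : Finset (Fin n → ℕ))
    (p : (Fin n → ℕ) → Prop) [DecidablePred p] :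
    degreeGenFun s = degreeGenFun {μ ∈ s | p μ} + degreeGenFun {μ ∈ s | ¬p μ} :=
  (sum_filter_add_sum_filter_not s p _).symm

section GeneratingFunction

variable {t c : ℕ} {a : ℕ → ℤ}

noncomputable def orderIdealFinset (t c : ℕ) (a : ℕ → ℤ) : Finset (Fin (c + 1) → ℕ) :=
  (orderIdeal_finite t c a).toFinset

lemma mem_orderIdealFinset {μ : Fin (c + 1) → ℕ} :
    μ ∈ orderIdealFinset t c a ↔ μ ∈ orderIdeal t c a :=
  Set.Finite.mem_toFinset _

lemma coeff_degreeGenFun_orderIdealFinset (i : ℕ) :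
    (degreeGenFun (orderIdealFinset t c a)).coeff i =
      ({μ ∈ orderIdeal t c a | ∑ k, μ k = i}.ncard : ℤ) := by
  rw [coeff_degreeGenFun, ← Set.ncard_coe_finset, coe_filter]
  simp only [mem_orderIdealFinset]

lemma natDegree_degreeGenFun_orderIdealFinset (ha : ∀ i ∈ Icc 1 (t + c + 1), 0 < a i)
    {g : Fin (c + 1) → ℕ} (hg : g ∈ orderIdealGens t c a) :
    (degreeGenFun (orderIdealFinset t c a)).natDegree = ∑ k, g k := by
  refine natDegree_eq_of_le_of_coeff_ne_zero (natDegree_le_iff_coeff_eq_zero.2 fun j hj => ?_) ?_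
  · rw [coeff_degreeGenFun, Nat.cast_eq_zero, card_eq_zero, filter_eq_empty_iff]
    intro μ hμ hμj
    have := sum_le_of_mem_orderIdeal ha (mem_orderIdealFinset.1 hμ) hg
    omega
  · rw [coeff_degreeGenFun, Nat.cast_ne_zero]
    exact card_ne_zero_of_mem (mem_filter.2 ⟨mem_orderIdealFinset.2 ⟨g, hg, le_rfl⟩, rfl⟩)

lemma degreeGenFun_filter_le_last_succ {N : ℕ} (hN : N = t + c + 2)
    (ha : ∀ i ∈ Icc 1 N, 0 < a i) :
    degreeGenFun {μ ∈ orderIdealFinset (t + 1) c a | (a N).toNat ≤ μ (Fin.last c)} =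
      X ^ (a N).toNat * degreeGenFun (orderIdealFinset t c a) := by
  subst hN
  set n := (a (t + c + 2)).toNat
  rw [degreeGenFun, degreeGenFun, mul_sum]
  symm
  refine sum_nbij' (· + Pi.single (Fin.last c) n) (· - Pi.single (Fin.last c) n)
    (fun ν hν => ?_) (fun μ hμ => ?_) (fun ν _ => add_tsub_cancel_right _ _) (fun μ hμ => ?_)
    (fun ν _ => ?_)
  · simp only [mem_filter, mem_orderIdealFinset, Pi.add_apply,
      Pi.single_eq_same] at hν ⊢
    exact ⟨add_single_last_mem_orderIdeal ha hν, by omega⟩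
  · simp only [mem_filter, mem_orderIdealFinset] at hμ ⊢
    exact sub_single_last_mem_orderIdeal ha hμ.1 hμ.2
  · simp only [mem_filter, mem_orderIdealFinset] at hμ
    refine tsub_add_cancel_of_le fun k => ?_
    rcases eq_or_ne k (Fin.last c) with rfl | hk
    · simpa using hμ.2
    · simp [Pi.single_eq_of_ne hk]
  · rw [← pow_add, add_comm]
    simp only [Pi.add_apply, sum_add_distrib, Fintype.sum_pi_single']

lemma filter_le_last_orderIdealFinset_zero {N : ℕ} (hN : N = c + 1) (ha : 0 < a N) :
    {μ ∈ orderIdealFinset 0 c a | (a N).toNat ≤ μ (Fin.last c)} = ∅ := by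
  subst hN
  exact filter_false_of_mem fun _ hμ =>
    not_le.2 (last_lt_of_mem_orderIdeal_zero ha (mem_orderIdealFinset.1 hμ))

lemma degreeGenFun_filter_last_lt_succ {N : ℕ} (hN : N = t + c + 2)
    (ha : ∀ i ∈ Icc 1 N, 0 < a i) :
    degreeGenFun {μ ∈ orderIdealFinset t (c + 1) a | μ (Fin.last (c + 1)) < (a N).toNat} =
      geom (a N) * degreeGenFun (orderIdealFinset t c a) := by
  subst hN
  rw [geom, degreeGenFun, degreeGenFun, sum_mul_sum, ← sum_product']
  symm
  refine sum_nbij' (fun p => Fin.snoc p.2 p.1) (fun μ => (μ (Fin.last (c + 1)), Fin.init μ))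
    (fun p hp => ?_) (fun μ hμ => ?_) (fun p _ => ?_) (fun μ _ => Fin.snoc_init_self μ)
    (fun p _ => ?_)
  · simp only [mem_product, mem_range, mem_orderIdealFinset] at hp
    simp only [mem_filter, mem_orderIdealFinset, Fin.snoc_last]
    exact ⟨snoc_mem_orderIdeal hp.2 hp.1, hp.1⟩
  · simp only [mem_filter, mem_orderIdealFinset] at hμ
    simp only [mem_product, mem_range, mem_orderIdealFinset]
    exact ⟨hμ.2, init_mem_orderIdeal ha hμ.1⟩
  · simp only [Fin.snoc_last, Fin.init_snoc]
  · rw [Fin.sum_snoc, pow_add, mul_comm]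

lemma degreeGenFun_filter_last_lt_zero {N : ℕ} (hN : N = t + 1)
    (ha : ∀ i ∈ Icc 1 N, 0 < a i) :
    degreeGenFun {μ ∈ orderIdealFinset t 0 a | μ (Fin.last 0) < (a N).toNat} = geom (a N) := by
  subst hN
  rw [geom, degreeGenFun]
  symm
  refine sum_nbij' (fun r _ => r) (fun μ => μ 0) (fun r hr => ?_) (fun μ hμ => ?_)
    (fun r _ => rfl) (fun μ _ => funext fun k => by rw [Fin.fin_one_eq_zero k]) (fun r _ => ?_)
  · simp only [mem_range] at hr
    simp only [mem_filter, mem_orderIdealFinset]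
    exact ⟨const_mem_orderIdeal_zero ha hr, hr⟩
  · simp only [mem_filter, mem_orderIdealFinset] at hμ
    simpa using hμ.2
  · simp

end GeneratingFunction

lemma hp_zero_left (m : ℕ) (A : Matrix (Fin 0) (Fin m) ℤ) : hp 0 m A = 0 := by
  rw [hp]

lemma hp_succ_self (t : ℕ) (A : Matrix (Fin (t + 1)) (Fin t) ℤ) : hp (t + 1) t A = 1 := by
  cases t with
  | zero => rw [hp]
  | succ t => rw [hp, if_pos le_rfl]

lemma hp_succ_succ {t m : ℕ} (h : t ≤ m) (A : Matrix (Fin (t + 1)) (Fin (m + 1)) ℤ) :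
    hp (t + 1) (m + 1) A =
      X ^ (A (Fin.last t) (Fin.last m)).toNat * hp t m (fun i j => A i.castSucc j.castSucc) +
        geom (A (Fin.last t) (Fin.last m)) * hp (t + 1) m (fun i j => A i j.castSucc) := by
  rw [hp, if_neg (by omega)]

theorem hp_eq_degreeGenFun_orderIdealFinset (t c m : ℕ) (hm : m = t + c + 1) {a : ℕ → ℤ}
    (ha : ∀ i ∈ Icc 1 m, 0 < a i) (A : Matrix (Fin (t + 1)) (Fin m) ℤ)
    (hA : ∀ i j, A i j = a (j + 1)) :
    hp (t + 1) m A = degreeGenFun (orderIdealFinset t c a) := by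
  subst hm
  rw [hp_succ_succ (by omega), hA, Fin.val_last,
    degreeGenFun_eq_filter_add_filter _ fun μ => (a (t + c + 1)).toNat ≤ μ (Fin.last c)]
  simp only [not_le]
  congr 1
  · cases t with
    | zero =>
      rw [filter_le_last_orderIdealFinset_zero (by omega) (ha _ (by simp)), degreeGenFun,
        sum_empty]
      exact mul_eq_zero_of_right _ (hp_zero_left _ _)
    | succ t =>
      rw [degreeGenFun_filter_le_last_succ (by omega) ha,
        hp_eq_degreeGenFun_orderIdealFinset t c _ (by omega)
          (fun i hi => ha i (Icc_subset_Icc_right (by omega) hi))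
          (fun i j => A i.castSucc j.castSucc)
          fun i j => hA _ _]
  · cases c with
    | zero =>
      rw [degreeGenFun_filter_last_lt_zero (by omega) ha]
      exact (congrArg _ (hp_succ_self _ _)).trans (mul_one _)
    | succ c =>
      rw [degreeGenFun_filter_last_lt_succ (by omega) ha,
        hp_eq_degreeGenFun_orderIdealFinset t c _ (by omega)
          (fun i hi => ha i (Icc_subset_Icc_right (by omega) hi)) (fun i j => A i j.castSucc)
          fun i j => hA _ _]
termination_by t + c

lemma IsDegreeMatrix.entry_pos {s m : ℕ} {A : Matrix (Fin s) (Fin m) ℤ} (hA : IsDegreeMatrix A)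
    {i : Fin s} {j : Fin m} (hij : (i : ℕ) ≤ j) : 0 < A i j :=
  (hA.2.2.2 i (by omega)).trans_le (hA.2.1 i _ j (Fin.le_iff_val_le_val.2 hij))

/-- For a degree matrix `A ∈ ℤ^{(t+1)×(t+c+1)}` (codimension `c+1`) with all rows equal to
`(a_1,…,a_{t+c+1})`, the h-polynomial of `A` is the generating function `Σ_i f_i(Γ) z^i`
of the pure order ideal `Γ` of monomials in `c+1` variables generated by the monomials
`y_1^{(Σ_{i=1}^{l_1-1} a_i)-1} ⋯ y_{c+1}^{(Σ_{i=l_c}^{t+c+1} a_i)-1}` over all sequences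
`1 = l_0 < l_1 < ⋯ < l_c ≤ t+c+1`; moreover `Γ` is pure (every maximal monomial of `Γ` has
degree `deg hp^A`). In particular the h-vector of `A` is a pure O-sequence. -/
theorem hp_equal_rows_pure_O_sequence (t c : ℕ)
    (A : Matrix (Fin (t + 1)) (Fin (t + c + 1)) ℤ) (hA : IsDegreeMatrix A)
    (heq : ∀ (i i' : Fin (t + 1)) (j : Fin (t + c + 1)), A i j = A i' j) :
    ∀ aZ : ℕ → ℤ, (aZ = fun i => if h : 1 ≤ i ∧ i - 1 < t + c + 1 then A 0 ⟨i - 1, h.2⟩ else 0) →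
    ∀ G : Set (Fin (c + 1) → ℕ),
      (G = {μ | ∃ l : Fin (c + 2) → ℕ, StrictMono l ∧ l 0 = 1 ∧
        l (Fin.last (c + 1)) = t + c + 2 ∧
        ∀ k : Fin (c + 1),
          μ k = ((∑ i ∈ Finset.Ico (l k.castSucc) (l k.succ), aZ i) - 1).toNat}) →
    ∀ Γ : Set (Fin (c + 1) → ℕ), (Γ = {μ | ∃ g ∈ G, μ ≤ g}) →
      (∀ i : ℕ, (hp (t + 1) (t + c + 1) A).coeff i =
          ({μ ∈ Γ | ∑ k, μ k = i}.ncard : ℤ)) ∧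
        ∀ μ ∈ Γ, (∀ ν ∈ Γ, μ ≤ ν → μ = ν) →
          ∑ k, μ k = (hp (t + 1) (t + c + 1) A).natDegree := by
  intro aZ haZ G hG Γ hΓ
  subst hG hΓ
  have hrow : ∀ i j, A i j = aZ (j + 1) := fun i j => by
    simp only [haZ, dif_pos (show 1 ≤ (j : ℕ) + 1 ∧ (j : ℕ) + 1 - 1 < t + c + 1 by omega)]
    exact heq i 0 j
  have hpos : ∀ i ∈ Icc 1 (t + c + 1), 0 < aZ i := fun i hi => by
    rw [mem_Icc] at hi
    simp only [haZ, dif_pos (show 1 ≤ i ∧ i - 1 < t + c + 1 by omega)]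
    exact hA.entry_pos (Nat.zero_le _)
  have hhp := hp_eq_degreeGenFun_orderIdealFinset t c _ rfl hpos A hrow
  refine ⟨fun i => by rw [hhp, coeff_degreeGenFun_orderIdealFinset]; rfl, ?_⟩
  rintro μ ⟨g, hg, hμg⟩ hmax
  obtain rfl := hmax g ⟨g, hg, le_rfl⟩ hμg
  rw [hhp, natDegree_degreeGenFun_orderIdealFinset hpos hg]
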